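/- Let α, β, N be real numbers and, for each integer j ≥ 0, define Z_j(s) = h_j^{β+N+1,α+N+1,−2−N}(−s−1). Then for every real s and every integer j ≥ 0: −(s+1)(s+1+α) Z_j(s+1) + ((s+α+1)(s−N) + s(s−β−N−1)) Z_j(s) − (s−β−N−1)(s−N−1) Z_j(s−1) = −(j+N+1)(j+N+α+β+2) Z_j(s). (This is the recurrence (relaR) for the dual Hahn recurrence coefficients a_n = n(n+α), b_n = −(n+α+1)(n−N) − n(n−β−N−1), c_n = (n−β−N−1)(n−N−1), with ε_n = −1 and eigenvalue −λ^{α,β}(j+N+1), where λ^{α,β}(x) = x(x+α+β+1).) -/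
import Mathlib


open Polynomial Finset

noncomputable section

/-- Pochhammer symbol `(a)_k = a(a+1)⋯(a+k−1)`. -/
def poch (a : ℝ) (k : ℕ) : ℝ := ∏ i ∈ Finset.range k, (a + i)

/-- The quadratic lattice `λ^{α,β}(x) = x(x+α+β+1)`. -/
def lam (α β x : ℝ) : ℝ := x * (x + α + β + 1)

/-- The dual Hahn polynomial `R_n^{α,β,N}`. -/
def dualHahn (α β N : ℝ) (n : ℕ) : Polynomial ℝ :=
  Polynomial.C ((n.factorial : ℝ))⁻¹ *
    ∑ j ∈ Finset.range (n + 1),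
      Polynomial.C ((-1 : ℝ) ^ j * poch (-(n : ℝ)) j * poch (-N + j) (n - j)
          / (poch (α + 1) j * (j.factorial : ℝ))) *
        ∏ i ∈ Finset.range j, (Polynomial.X - Polynomial.C ((i : ℝ) * (α + β + 1 + i)))

/-- Dual Hahn polynomial with integer index; `R_k = 0` for `k < 0`. -/
def dualHahnZ (α β N : ℝ) (k : ℤ) : Polynomial ℝ :=
  if 0 ≤ k then dualHahn α β N k.toNat else 0

/-- The Hahn polynomial `h_n^{α,β,N}` evaluated at `x`. -/
def hahn (α β N : ℝ) (n : ℕ) (x : ℝ) : ℝ :=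
  ∑ j ∈ Finset.range (n + 1),
    poch (-(n : ℝ)) j * poch ((n : ℝ) + α + β + 1) j * poch (-N + j) (n - j) *
      poch (α + j + 1) (n - j) * poch (-x) j / (j.factorial : ℝ)

/-- The dual Hahn weight `w_{*;α,β,N}(x)`. -/
def dualHahnWeight (α β : ℝ) (N : ℕ) (x : ℕ) : ℝ :=
  (2 * (x : ℝ) + α + β + 1) * poch (α + 1) x * poch (-(N : ℝ)) x * (N.factorial : ℝ) /
    ((-1 : ℝ) ^ x * poch ((x : ℝ) + α + β + 1) (N + 1) * poch (β + 1) x * (x.factorial : ℝ))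

lemma poch_succ (a : ℝ) (k : ℕ) : poch a (k + 1) = poch a k * (a + k) := by
  simp [poch, Finset.prod_range_succ]

lemma poch_succ' (a : ℝ) (k : ℕ) : poch a (k + 1) = a * poch (a + 1) k := by
  rw [poch, Finset.prod_range_succ', poch, mul_comm]
  congr 1
  · norm_num
  · exact Finset.prod_congr rfl fun i _ => by push_cast; ring

/-- Coefficient of `poch (s+1) k` in `Z_j(s)`. -/
def Acoef (α β N : ℝ) (j k : ℕ) : ℝ :=
  poch (-(j : ℝ)) k * poch ((j : ℝ) + (β + N + 1) + (α + N + 1) + 1) k *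
    poch (-(-2 - N) + k) (j - k) * poch ((β + N + 1) + k + 1) (j - k) / (k.factorial : ℝ)

lemma hahn_eval (α β N : ℝ) (j : ℕ) (x : ℝ) :
    hahn (β + N + 1) (α + N + 1) (-2 - N) j x =
      ∑ k ∈ Finset.range (j + 1), Acoef α β N j k * poch (-x) k := by
  unfold hahn Acoef
  exact Finset.sum_congr rfl fun k _ => by ring

/-- Action of the difference operator on the basis `poch (s+1) k`. -/
lemma Lp (α β N s : ℝ) (k : ℕ) :
    -(s + 1) * (s + 1 + α) * poch (s + 2) k
      + ((s + α + 1) * (s - N) + s * (s - β - N - 1)) * poch (s + 1) k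
      - (s - β - N - 1) * (s - N - 1) * poch s k
    = -(((k : ℝ) + N + 1) * ((k : ℝ) + N + α + β + 2)) * poch (s + 1) k
      + ((k : ℝ) * ((k : ℝ) + N + 1) * (β + N + (k : ℝ) + 1)) * poch (s + 1) (k - 1) := by
  cases k with
  | zero => simp [poch]; ring
  | succ m =>
    have e1 : (s + 1) * poch (s + 2) m = poch (s + 1) m * (s + 1 + (m : ℝ)) := by
      have h := poch_succ' (s + 1) m
      rw [show (s : ℝ) + 1 + 1 = s + 2 by ring] at h
      rw [← h, poch_succ (s + 1) m]
    have h1 : (s + 1) * poch (s + 2) (m + 1)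
        = poch (s + 1) m * ((s + 1 + (m : ℝ)) * (s + 2 + (m : ℝ))) := by
      rw [poch_succ (s + 2) m]
      linear_combination (s + 2 + (m : ℝ)) * e1
    have h2 : poch s (m + 1) = s * poch (s + 1) m := poch_succ' s m
    have h3 : poch (s + 1) (m + 1) = poch (s + 1) m * (s + 1 + (m : ℝ)) := poch_succ (s + 1) m
    simp only [Nat.add_sub_cancel]
    push_cast
    linear_combination (-(s + 1 + α)) * h1 - ((s - β - N - 1) * (s - N - 1)) * h2
      + (((s + α + 1) * (s - N) + s * (s - β - N - 1))
          + ((m : ℝ) + 1 + N + 1) * ((m : ℝ) + 1 + N + α + β + 2)) * h3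

/-- Contiguous relation between consecutive coefficients. -/
lemma Arel (α β N : ℝ) (j k : ℕ) (hk : k < j) :
    Acoef α β N j k *
        (((j : ℝ) + N + 1) * ((j : ℝ) + N + α + β + 2)
          - ((k : ℝ) + N + 1) * ((k : ℝ) + N + α + β + 2))
      + Acoef α β N j (k + 1) *
        (((k : ℝ) + 1) * (((k : ℝ) + 1) + N + 1) * (β + N + ((k : ℝ) + 1) + 1)) = 0 := by
  obtain ⟨m, hm⟩ : ∃ m, j - k = m + 1 := ⟨j - k - 1, by omega⟩
  have hjk1 : j - (k + 1) = m := by omega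
  unfold Acoef
  rw [hm, hjk1]
  have c1 : (-(-2 - N) + ((k + 1 : ℕ) : ℝ)) = -(-2 - N) + (k : ℝ) + 1 := by push_cast; ring
  have c2 : ((β + N + 1) + ((k + 1 : ℕ) : ℝ) + 1) = (β + N + 1) + (k : ℝ) + 1 + 1 := by
    push_cast; ring
  rw [c1, c2, poch_succ (-(j : ℝ)) k, poch_succ ((j : ℝ) + (β + N + 1) + (α + N + 1) + 1) k,
    poch_succ' (-(-2 - N) + (k : ℝ)) m, poch_succ' ((β + N + 1) + (k : ℝ) + 1) m,
    Nat.factorial_succ]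
  have hfac : ((k.factorial : ℝ)) ≠ 0 := by positivity
  have hk1 : ((k : ℝ) + 1) ≠ 0 := by positivity
  push_cast
  field_simp
  ring

/-- The Hahn polynomials `Z_j(s) = h_j^{β+N+1,α+N+1,−2−N}(−s−1)` satisfy the recurrence
(relaR) for the dual Hahn recurrence coefficients with `ε_n = −1` and eigenvalue
`−λ^{α,β}(j+N+1)`. -/
theorem hahn_rec_one (α β N : ℝ) (j : ℕ) (s : ℝ) :
    -(s + 1) * (s + 1 + α) * hahn (β + N + 1) (α + N + 1) (-2 - N) j (-(s + 1) - 1) +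
      ((s + α + 1) * (s - N) + s * (s - β - N - 1)) *
        hahn (β + N + 1) (α + N + 1) (-2 - N) j (-s - 1) -
      (s - β - N - 1) * (s - N - 1) * hahn (β + N + 1) (α + N + 1) (-2 - N) j (-(s - 1) - 1) =
    -((j + N + 1) * (j + N + α + β + 2)) * hahn (β + N + 1) (α + N + 1) (-2 - N) j (-s - 1) := by
  have step : ∀ k ∈ Finset.range (j + 1),
      -(s + 1) * (s + 1 + α) * (Acoef α β N j k * poch (s + 2) k)
        + ((s + α + 1) * (s - N) + s * (s - β - N - 1)) * (Acoef α β N j k * poch (s + 1) k)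
        - (s - β - N - 1) * (s - N - 1) * (Acoef α β N j k * poch s k)
        - -((j + N + 1) * (j + N + α + β + 2)) * (Acoef α β N j k * poch (s + 1) k)
      = Acoef α β N j k *
          ((((j : ℝ) + N + 1) * ((j : ℝ) + N + α + β + 2)
            - ((k : ℝ) + N + 1) * ((k : ℝ) + N + α + β + 2)) * poch (s + 1) k)
        + Acoef α β N j k *
          (((k : ℝ) * ((k : ℝ) + N + 1) * (β + N + (k : ℝ) + 1)) * poch (s + 1) (k - 1)) := by
    intro k _
    linear_combination (Acoef α β N j k) * Lp α β N s k
  simp only [hahn_eval]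
  simp only [show -(-(s + 1) - 1) = s + 2 from by ring, show -(-s - 1) = s + 1 from by ring,
    show -(-(s - 1) - 1) = s from by ring]
  rw [← sub_eq_zero, Finset.mul_sum, Finset.mul_sum, Finset.mul_sum, Finset.mul_sum,
    ← Finset.sum_add_distrib, ← Finset.sum_sub_distrib, ← Finset.sum_sub_distrib,
    Finset.sum_congr rfl step, Finset.sum_add_distrib, Finset.sum_range_succ,
    Finset.sum_range_succ']
  simp only [Nat.cast_zero, zero_mul, mul_zero, sub_self, add_zero, Nat.add_sub_cancel]
  rw [← Finset.sum_add_distrib]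
  apply Finset.sum_eq_zero
  intro k hk
  push_cast
  linear_combination (poch (s + 1) k) * Arel α β N j k (Finset.mem_range.mp hk)

end
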